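/- arXiv:1410.0194 — 2 statements merged into one kernel-verified Lean document; each statement's English description precedes it below -/
import Mathlib

section
/- Let S be a bilattice of pairs of projections on Hilbert spaces H₁, H₂, and define M(S) = {T ∈ B(H₁,H₂) : Q T P = 0 for all (P,Q) ∈ S}. Then M(S) is a weak-operator-topology closed linear subspace of B(H₁,H₂), and it is reflexive: every T ∈ B(H₁,H₂) with Tξ ∈ closure(span{Uξ : U ∈ M(S)}) for all ξ ∈ H₁ belongs to M(S). -/
noncomputable section

section Defs

variable {H H₁ H₂ : Type*}
variable [NormedAddCommGroup H] [InnerProductSpace ℂ H] [CompleteSpace H]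
variable [NormedAddCommGroup H₁] [InnerProductSpace ℂ H₁] [CompleteSpace H₁]
variable [NormedAddCommGroup H₂] [InnerProductSpace ℂ H₂] [CompleteSpace H₂]

/-- `P` is an orthogonal projection operator. -/
def IsProjOp (P : H →L[ℂ] H) : Prop :=
  IsSelfAdjoint P ∧ P.comp P = P

/-- The orthogonal projection onto the closure of `K`, as an operator `H →L[ℂ] H`. -/
def projOf (K : Submodule ℂ H) : H →L[ℂ] H :=
  K.topologicalClosure.subtypeL.comp K.topologicalClosure.orthogonalProjectionOnto

/-- The supremum of a family of projections: projection onto closed span of ranges. -/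
def pSup {ι : Type*} (f : ι → H →L[ℂ] H) : H →L[ℂ] H :=
  projOf (⨆ i, LinearMap.range (f i : H →ₗ[ℂ] H))

/-- The infimum of a family of projections: projection onto intersection of ranges. -/
def pInf {ι : Type*} (f : ι → H →L[ℂ] H) : H →L[ℂ] H :=
  projOf (⨅ i, LinearMap.range (f i : H →ₗ[ℂ] H))

/-- Binary infimum of projections. -/
def pAnd (P Q : H →L[ℂ] H) : H →L[ℂ] H := projOf (LinearMap.range (P : H →ₗ[ℂ] H) ⊓ LinearMap.range (Q : H →ₗ[ℂ] H))

/-- Binary supremum of projections. -/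
def pOr (P Q : H →L[ℂ] H) : H →L[ℂ] H := projOf (LinearMap.range (P : H →ₗ[ℂ] H) ⊔ LinearMap.range (Q : H →ₗ[ℂ] H))

/-- Order on projections: inclusion of ranges. -/
def pLe (P Q : H →L[ℂ] H) : Prop :=
  LinearMap.range (P : H →ₗ[ℂ] H) ≤ LinearMap.range (Q : H →ₗ[ℂ] H)

/-- `span (U ξ)`. -/
def opSpan (U : Set (H₁ →L[ℂ] H₂)) (ξ : H₁) : Submodule ℂ H₂ :=
  Submodule.span ℂ {y | ∃ T ∈ U, T ξ = y}

/-- The reflexive hull of a set of operators. -/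
def RefSet (U : Set (H₁ →L[ℂ] H₂)) : Set (H₁ →L[ℂ] H₂) :=
  {T | ∀ ξ : H₁, T ξ ∈ (opSpan U ξ).topologicalClosure}

/-- `Map U`: sends a projection `P` to the projection onto the closed span of `{T (P ξ)}`. -/
def mapU (U : Set (H₁ →L[ℂ] H₂)) (P : H₁ →L[ℂ] H₁) : H₂ →L[ℂ] H₂ :=
  projOf (Submodule.span ℂ {y | ∃ T ∈ U, ∃ ξ, T (P ξ) = y})

/-- The masa-bimodule `M(S)` associated to a bilattice. -/
def MS (S : Set ((H₁ →L[ℂ] H₁) × (H₂ →L[ℂ] H₂))) : Set (H₁ →L[ℂ] H₂) :=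
  {T | ∀ pq ∈ S, pq.2.comp (T.comp pq.1) = 0}

/-- The bilattice `Bil(U)` of a set of operators. -/
def BilU (U : Set (H₁ →L[ℂ] H₂)) : Set ((H₁ →L[ℂ] H₁) × (H₂ →L[ℂ] H₂)) :=
  {pq | IsProjOp pq.1 ∧ IsProjOp pq.2 ∧ ∀ T ∈ U, pq.2.comp (T.comp pq.1) = 0}

/-- `Alg(L)`: operators leaving the range of every projection of `L` invariant. -/
def AlgL (L : Set (H →L[ℂ] H)) : Set (H →L[ℂ] H) :=
  {T | ∀ P ∈ L, ∀ x ∈ LinearMap.range (P : H →ₗ[ℂ] H), T x ∈ LinearMap.range (P : H →ₗ[ℂ] H)}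

/-- `Lat(A)`: projections `P` with `(1-P) A P = 0`. -/
def LatA (A : Set (H →L[ℂ] H)) : Set (H →L[ℂ] H) :=
  {P | IsProjOp P ∧ ∀ T ∈ A, (1 - P).comp (T.comp P) = 0}

/-- `Op(θ)` for a map `θ` defined on a set of projections `L`. -/
def OpTh (L : Set (H₁ →L[ℂ] H₁)) (θ : (H₁ →L[ℂ] H₁) → (H₂ →L[ℂ] H₂)) : Set (H₁ →L[ℂ] H₂) :=
  {T | ∀ P ∈ L, (1 - θ P).comp (T.comp P) = 0}

/-! `MS S` is the intersection over `(P, Q) ∈ S` of the sets `{T | Q T P = 0}`. Each of them is a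
linear subspace, closed in the weak operator topology because `T ↦ φ (Q (T (P ξ)))` is
WOT-continuous for every functional `φ`. If `T ξ'` lies in the closed span of the vectors `U ξ'`
for `ξ' = P ξ`, then the bounded operator `Q` sends it into the closed span of the vectors
`Q (U (P ξ)) = 0`, which gives reflexivity. -/

section WeakOperatorTopology

variable {𝕜 D E F G : Type*} [NormedField 𝕜]
  [AddCommGroup D] [TopologicalSpace D] [Module 𝕜 D]
  [AddCommGroup E] [TopologicalSpace E] [Module 𝕜 E]
  [AddCommGroup F] [TopologicalSpace F] [Module 𝕜 F] [IsTopologicalAddGroup F]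
  [ContinuousConstSMul 𝕜 F]
  [AddCommGroup G] [TopologicalSpace G] [Module 𝕜 G] [IsTopologicalAddGroup G]
  [ContinuousConstSMul 𝕜 G] [SeparatingDual 𝕜 G]

theorem ContinuousLinearMapWOT.isClosed_setOf_comp_comp_eq_zero (Q : F →L[𝕜] G)
    (P : D →L[𝕜] E) :
    IsClosed {A : E →WOT[𝕜] F | Q.comp (A.toCLM.comp P) = 0} := by
  have hcont : Continuous fun A : E →WOT[𝕜] F => (ofCLM Q).comp (A.comp (ofCLM P)) := by
    fun_prop
  simpa [← toCLM_injective.eq_iff] using isClosed_eq hcont continuous_const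

end WeakOperatorTopology

section

variable {E₁ E₂ : Type*} [NormedAddCommGroup E₁] [InnerProductSpace ℂ E₁]
  [NormedAddCommGroup E₂] [InnerProductSpace ℂ E₂]

def submoduleMS (S : Set ((E₁ →L[ℂ] E₁) × (E₂ →L[ℂ] E₂))) : Submodule ℂ (E₁ →L[ℂ] E₂) where
  carrier := MS S
  zero_mem' _ _ := by simp
  add_mem' hT hT' pq hpq := by simp [hT pq hpq, hT' pq hpq]
  smul_mem' _ _ hT pq hpq := by simp [hT pq hpq]

theorem isClosed_image_ofCLM_MS (S : Set ((E₁ →L[ℂ] E₁) × (E₂ →L[ℂ] E₂))) :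
    IsClosed ((ContinuousLinearMapWOT.ofCLM : (E₁ →L[ℂ] E₂) → E₁ →WOT[ℂ] E₂) '' MS S) := by
  rw [Set.image_eq_preimage_of_inverse ContinuousLinearMapWOT.toCLM_ofCLM
    ContinuousLinearMapWOT.ofCLM_toCLM]
  simpa only [MS, Set.preimage_iInter₂, Set.preimage_ofPred_eq, Set.ofPred_forall] using
    isClosed_biInter fun (pq : (E₁ →L[ℂ] E₁) × (E₂ →L[ℂ] E₂)) _ =>
      ContinuousLinearMapWOT.isClosed_setOf_comp_comp_eq_zero pq.2 pq.1

theorem comp_comp_eq_zero_of_mem_RefSet {D F : Type*} [NormedAddCommGroup D] [NormedSpace ℂ D]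
    [NormedAddCommGroup F] [NormedSpace ℂ F] {U : Set (E₁ →L[ℂ] E₂)} {P : D →L[ℂ] E₁}
    {Q : E₂ →L[ℂ] F} (hU : ∀ A ∈ U, Q.comp (A.comp P) = 0) {T : E₁ →L[ℂ] E₂}
    (hT : T ∈ RefSet U) : Q.comp (T.comp P) = 0 := by
  ext ξ
  have hspan : opSpan U (P ξ) ≤ LinearMap.ker (Q : E₂ →ₗ[ℂ] F) := by
    rw [opSpan, Submodule.span_le]
    rintro _ ⟨A, hA, rfl⟩
    exact congr($(hU A hA) ξ)
  exact Submodule.topologicalClosure_minimal _ hspan Q.isClosed_ker (hT (P ξ))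

theorem RefSet_MS_subset (S : Set ((E₁ →L[ℂ] E₁) × (E₂ →L[ℂ] E₂))) : RefSet (MS S) ⊆ MS S :=
  fun _ hT pq hpq => comp_comp_eq_zero_of_mem_RefSet (fun A (hA : A ∈ MS S) => hA pq hpq) hT

end

theorem stmt1_general (S : Set ((H₁ →L[ℂ] H₁) × (H₂ →L[ℂ] H₂))) :
    (0 : H₁ →L[ℂ] H₂) ∈ MS S ∧
    (∀ T ∈ MS S, ∀ T' ∈ MS S, T + T' ∈ MS S) ∧
    (∀ (c : ℂ), ∀ T ∈ MS S, c • T ∈ MS S) ∧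
    IsClosed ((ContinuousLinearMapWOT.ofCLM : (H₁ →L[ℂ] H₂) → H₁ →WOT[ℂ] H₂) '' MS S) ∧
    (∀ T ∈ RefSet (MS S), T ∈ MS S) :=
  ⟨(submoduleMS S).zero_mem, fun _ hT _ hT' => (submoduleMS S).add_mem hT hT',
    fun c _ hT => (submoduleMS S).smul_mem c hT, isClosed_image_ofCLM_MS S, RefSet_MS_subset S⟩

theorem stmt1 (S : Set ((H₁ →L[ℂ] H₁) × (H₂ →L[ℂ] H₂)))
    (hproj : ∀ pq ∈ S, IsProjOp pq.1 ∧ IsProjOp pq.2)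
    (h00 : ((0 : H₁ →L[ℂ] H₁), (0 : H₂ →L[ℂ] H₂)) ∈ S)
    (h10 : ((1 : H₁ →L[ℂ] H₁), (0 : H₂ →L[ℂ] H₂)) ∈ S)
    (h01 : ((0 : H₁ →L[ℂ] H₁), (1 : H₂ →L[ℂ] H₂)) ∈ S)
    (hbil : ∀ p ∈ S, ∀ q ∈ S,
      (pAnd p.1 q.1, pOr p.2 q.2) ∈ S ∧ (pOr p.1 q.1, pAnd p.2 q.2) ∈ S) :
    (0 : H₁ →L[ℂ] H₂) ∈ MS S ∧
    (∀ T ∈ MS S, ∀ T' ∈ MS S, T + T' ∈ MS S) ∧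
    (∀ (c : ℂ), ∀ T ∈ MS S, c • T ∈ MS S) ∧
    IsClosed ((ContinuousLinearMapWOT.ofCLM : (H₁ →L[ℂ] H₂) → H₁ →WOT[ℂ] H₂) '' MS S) ∧
    (∀ T ∈ RefSet (MS S), T ∈ MS S) :=
  stmt1_general S

end Defs
end
end

section
/- Let U ⊆ B(H₁,H₂) be a subspace, φ = Map(U), and S = {(P,Q) : P a projection on H₁, Q a projection on H₂, φ(P) ≤ 1 − Q}. Then S is a bilattice which is closed under arbitrary mixed suprema/infima: for any family (Pᵢ,Qᵢ) in S, both (⨆ᵢPᵢ, ⨅ᵢQᵢ) and (⨅ᵢPᵢ, ⨆ᵢQᵢ) belong to S. -/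
/-!
For a set `U` of operators and a subspace `B ⊆ H₂`, let `X(B) = ⋂_{T ∈ U} T⁻¹(Bᗮ)`
(`leftAnnihilator`). Since `1 - Q` projects onto `(range Q)ᗮ`, the condition
`Map(U)(P) ≤ 1 - Q` says exactly that `range P ≤ X(range Q)`. The map `X` is antitone, takes
closed values, ignores closures and turns suprema into infima; hence the condition passes from a
family `(Pᵢ, Qᵢ)` to both mixed pairs `(⋁ Pᵢ, ⋀ Qᵢ)` and `(⋀ Pᵢ, ⋁ Qᵢ)`. The binary operations
are the case of families indexed by `Bool`.
-/

noncomputable section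

section Defs

variable {H H₁ H₂ : Type*}
variable [NormedAddCommGroup H] [InnerProductSpace ℂ H] [CompleteSpace H]
variable [NormedAddCommGroup H₁] [InnerProductSpace ℂ H₁] [CompleteSpace H₁]
variable [NormedAddCommGroup H₂] [InnerProductSpace ℂ H₂] [CompleteSpace H₂]

lemma Submodule.topologicalClosure_le_iff {R M : Type*} [Semiring R] [TopologicalSpace M]
    [AddCommMonoid M] [Module R M] [ContinuousConstSMul R M] [ContinuousAdd M]
    {s t : Submodule R M} (ht : IsClosed (t : Set M)) : s.topologicalClosure ≤ t ↔ s ≤ t :=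
  ⟨s.le_topologicalClosure.trans, fun h => s.topologicalClosure_minimal h ht⟩

section LeftAnnihilator

variable {𝕜 E F : Type*} [RCLike 𝕜] [NormedAddCommGroup E] [InnerProductSpace 𝕜 E]
  [NormedAddCommGroup F] [InnerProductSpace 𝕜 F] (U : Set (E →L[𝕜] F))

def leftAnnihilator (B : Submodule 𝕜 F) : Submodule 𝕜 E :=
  ⨅ T ∈ U, Bᗮ.comap (T : E →ₗ[𝕜] F)

lemma mem_leftAnnihilator {B : Submodule 𝕜 F} {x : E} :
    x ∈ leftAnnihilator U B ↔ ∀ T ∈ U, T x ∈ Bᗮ := by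
  simp only [leftAnnihilator, Submodule.mem_iInf, Submodule.mem_comap, ContinuousLinearMap.coe_coe]

lemma isClosed_leftAnnihilator (B : Submodule 𝕜 F) : IsClosed (leftAnnihilator U B : Set E) := by
  have h : (leftAnnihilator U B : Set E) = ⋂ T ∈ U, T ⁻¹' (Bᗮ : Set F) := by
    ext x
    simp only [SetLike.mem_coe, mem_leftAnnihilator, Set.mem_iInter, Set.mem_preimage]
  rw [h]
  exact isClosed_biInter fun T _ => (Submodule.isClosed_orthogonal B).preimage T.continuous

lemma leftAnnihilator_antitone : Antitone (leftAnnihilator U) := fun _ _ hB =>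
  iInf₂_mono fun _ _ => Submodule.comap_mono (Submodule.orthogonal_le hB)

lemma leftAnnihilator_iSup {ι : Type*} (B : ι → Submodule 𝕜 F) :
    leftAnnihilator U (⨆ i, B i) = ⨅ i, leftAnnihilator U (B i) := by
  ext x
  simp only [mem_leftAnnihilator, ← Submodule.iInf_orthogonal, Submodule.mem_iInf]
  exact ⟨fun h i T hT => h T hT i, fun h T hT i => h i T hT⟩

lemma leftAnnihilator_topologicalClosure (B : Submodule 𝕜 F) :
    leftAnnihilator U B.topologicalClosure = leftAnnihilator U B := by
  rw [leftAnnihilator, Submodule.orthogonal_closure, leftAnnihilator]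

lemma topologicalClosure_le_leftAnnihilator_iff {A : Submodule 𝕜 E} {B : Submodule 𝕜 F} :
    A.topologicalClosure ≤ leftAnnihilator U B.topologicalClosure ↔ A ≤ leftAnnihilator U B := by
  rw [leftAnnihilator_topologicalClosure,
    Submodule.topologicalClosure_le_iff (isClosed_leftAnnihilator U B)]

end LeftAnnihilator

lemma isProjOp_iff_isStarProjection {P : H →L[ℂ] H} : IsProjOp P ↔ IsStarProjection P :=
  ⟨fun h => ⟨h.2, h.1⟩, fun h => ⟨h.isSelfAdjoint, h.isIdempotentElem⟩⟩

lemma isProjOp_zero : IsProjOp (0 : H →L[ℂ] H) :=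
  isProjOp_iff_isStarProjection.mpr (IsStarProjection.zero _)

lemma isProjOp_one : IsProjOp (1 : H →L[ℂ] H) :=
  isProjOp_iff_isStarProjection.mpr (IsStarProjection.one _)

lemma isProjOp_projOf (K : Submodule ℂ H) : IsProjOp (projOf K) :=
  isProjOp_iff_isStarProjection.mpr isStarProjection_starProjection

lemma range_projOf (K : Submodule ℂ H) :
    LinearMap.range (projOf K : H →ₗ[ℂ] H) = K.topologicalClosure :=
  Submodule.range_starProjection _

lemma IsProjOp.range_one_sub {Q : H →L[ℂ] H} (hQ : IsProjOp Q) :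
    LinearMap.range ((1 - Q : H →L[ℂ] H) : H →ₗ[ℂ] H) = (LinearMap.range (Q : H →ₗ[ℂ] H))ᗮ := by
  obtain ⟨_, hQ_eq⟩ :=
    isStarProjection_iff_eq_starProjection_range.mp (isProjOp_iff_isStarProjection.mp hQ)
  conv_lhs => rw [hQ_eq, ← Submodule.starProjection_orthogonal']
  exact Submodule.range_starProjection _

lemma pLe_mapU_one_sub_iff {E : Type*} [NormedAddCommGroup E] [InnerProductSpace ℂ E]
    (U : Set (E →L[ℂ] H₂)) {P : E →L[ℂ] E} {Q : H₂ →L[ℂ] H₂} (hQ : IsProjOp Q) :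
    pLe (mapU U P) (1 - Q) ↔
      LinearMap.range (P : E →ₗ[ℂ] E) ≤ leftAnnihilator U (LinearMap.range (Q : H₂ →ₗ[ℂ] H₂)) := by
  rw [pLe, mapU, range_projOf, hQ.range_one_sub,
    Submodule.topologicalClosure_le_iff (Submodule.isClosed_orthogonal _), Submodule.span_le]
  constructor
  · rintro h _ ⟨ξ, rfl⟩
    exact (mem_leftAnnihilator U).mpr fun T hT => h ⟨T, hT, ξ, rfl⟩
  · rintro h _ ⟨T, hT, ξ, rfl⟩
    exact (mem_leftAnnihilator U).mp (h ⟨ξ, rfl⟩) T hT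

def mapUPairs (U : Set (H₁ →L[ℂ] H₂)) : Set ((H₁ →L[ℂ] H₁) × (H₂ →L[ℂ] H₂)) :=
  {pq | IsProjOp pq.1 ∧ IsProjOp pq.2 ∧ pLe (mapU U pq.1) (1 - pq.2)}

section MapUPairs

variable (U : Set (H₁ →L[ℂ] H₂))

lemma mem_mapUPairs_iff {P : H₁ →L[ℂ] H₁} {Q : H₂ →L[ℂ] H₂} :
    (P, Q) ∈ mapUPairs U ↔ IsProjOp P ∧ IsProjOp Q ∧
      LinearMap.range (P : H₁ →ₗ[ℂ] H₁) ≤ leftAnnihilator U (LinearMap.range (Q : H₂ →ₗ[ℂ] H₂)) :=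
  and_congr_right fun _ => and_congr_right (pLe_mapU_one_sub_iff U)

lemma mk_zero_mem_mapUPairs {P : H₁ →L[ℂ] H₁} (hP : IsProjOp P) : (P, 0) ∈ mapUPairs U := by
  refine (mem_mapUPairs_iff U).mpr ⟨hP, isProjOp_zero, ?_⟩
  simp [leftAnnihilator]

lemma zero_mk_mem_mapUPairs {Q : H₂ →L[ℂ] H₂} (hQ : IsProjOp Q) : (0, Q) ∈ mapUPairs U :=
  (mem_mapUPairs_iff U).mpr ⟨isProjOp_zero, hQ, by simp⟩

variable {ι : Type*} {P : ι → H₁ →L[ℂ] H₁} {Q : ι → H₂ →L[ℂ] H₂}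

lemma pSup_pInf_mem_mapUPairs (h : ∀ i, (P i, Q i) ∈ mapUPairs U) :
    (pSup P, pInf Q) ∈ mapUPairs U := by
  refine (mem_mapUPairs_iff U).mpr ⟨isProjOp_projOf _, isProjOp_projOf _, ?_⟩
  rw [pSup, pInf, range_projOf, range_projOf, topologicalClosure_le_leftAnnihilator_iff]
  exact iSup_le fun i =>
    ((mem_mapUPairs_iff U).mp (h i)).2.2.trans (leftAnnihilator_antitone U (iInf_le _ i))

lemma pInf_pSup_mem_mapUPairs (h : ∀ i, (P i, Q i) ∈ mapUPairs U) :
    (pInf P, pSup Q) ∈ mapUPairs U := by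
  refine (mem_mapUPairs_iff U).mpr ⟨isProjOp_projOf _, isProjOp_projOf _, ?_⟩
  rw [pSup, pInf, range_projOf, range_projOf, topologicalClosure_le_leftAnnihilator_iff,
    leftAnnihilator_iSup]
  exact le_iInf fun i => (iInf_le _ i).trans ((mem_mapUPairs_iff U).mp (h i)).2.2

end MapUPairs

lemma pAnd_eq_pInf (P Q : H →L[ℂ] H) : pAnd P Q = pInf fun b : Bool => cond b P Q := by
  rw [pAnd, pInf, inf_eq_iInf]
  exact congrArg projOf (iInf_congr fun b => by cases b <;> rfl)

lemma pOr_eq_pSup (P Q : H →L[ℂ] H) : pOr P Q = pSup fun b : Bool => cond b P Q := by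
  rw [pOr, pSup, sup_eq_iSup]
  exact congrArg projOf (iSup_congr fun b => by cases b <;> rfl)

section MapUPairsBinary

variable (U : Set (H₁ →L[ℂ] H₂)) {p q : (H₁ →L[ℂ] H₁) × (H₂ →L[ℂ] H₂)}

lemma pAnd_pOr_mem_mapUPairs (hp : p ∈ mapUPairs U) (hq : q ∈ mapUPairs U) :
    (pAnd p.1 q.1, pOr p.2 q.2) ∈ mapUPairs U := by
  rw [pAnd_eq_pInf, pOr_eq_pSup]
  exact pInf_pSup_mem_mapUPairs U (by rintro (_ | _); exacts [hq, hp])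

lemma pOr_pAnd_mem_mapUPairs (hp : p ∈ mapUPairs U) (hq : q ∈ mapUPairs U) :
    (pOr p.1 q.1, pAnd p.2 q.2) ∈ mapUPairs U := by
  rw [pOr_eq_pSup, pAnd_eq_pInf]
  exact pSup_pInf_mem_mapUPairs U (by rintro (_ | _); exacts [hq, hp])

end MapUPairsBinary

theorem stmt5 (U : Set (H₁ →L[ℂ] H₂))
    (S : Set ((H₁ →L[ℂ] H₁) × (H₂ →L[ℂ] H₂)))
    (hS : S = {pq | IsProjOp pq.1 ∧ IsProjOp pq.2 ∧ pLe (mapU U pq.1) (1 - pq.2)}) :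
    (((0 : H₁ →L[ℂ] H₁), (0 : H₂ →L[ℂ] H₂)) ∈ S ∧
     ((1 : H₁ →L[ℂ] H₁), (0 : H₂ →L[ℂ] H₂)) ∈ S ∧
     ((0 : H₁ →L[ℂ] H₁), (1 : H₂ →L[ℂ] H₂)) ∈ S) ∧
    (∀ p ∈ S, ∀ q ∈ S,
      (pAnd p.1 q.1, pOr p.2 q.2) ∈ S ∧ (pOr p.1 q.1, pAnd p.2 q.2) ∈ S) ∧
    (∀ (ι : Type) (f : ι → ((H₁ →L[ℂ] H₁) × (H₂ →L[ℂ] H₂))), (∀ i, f i ∈ S) →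
      (pSup (fun i => (f i).1), pInf (fun i => (f i).2)) ∈ S ∧
      (pInf (fun i => (f i).1), pSup (fun i => (f i).2)) ∈ S) := by
  obtain rfl : S = mapUPairs U := hS
  exact ⟨⟨zero_mk_mem_mapUPairs U isProjOp_zero, mk_zero_mem_mapUPairs U isProjOp_one,
      zero_mk_mem_mapUPairs U isProjOp_one⟩,
    fun p hp q hq => ⟨pAnd_pOr_mem_mapUPairs U hp hq, pOr_pAnd_mem_mapUPairs U hp hq⟩,
    fun ι f hf => ⟨pSup_pInf_mem_mapUPairs U hf, pInf_pSup_mem_mapUPairs U hf⟩⟩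

end Defs
end
end
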